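/- Let D be compact, H₁ a separable Hilbert space, S : M(D,H₁) → H₂ linear and weak-* continuous with dim(Ran S) = N_S < ∞, p_d ∈ H₂ and α > 0. Then every extremal point of the solution set of the problem min_{u ∈ M(D,H₁)} (1/(2α))‖S u − p_d‖² + ‖u‖_{M(D,H₁)} is a linear combination of at most N_S Dirac delta measures. -/

import Mathlib

open NormedSpace

/-- The `H`-valued vector measure `c δ_x` as an element of the dual of `C(D, H)`. -/
noncomputable def dirac {D H : Type*} [TopologicalSpace D] [CompactSpace D]
    [NormedAddCommGroup H] [InnerProductSpace ℝ H] (c : H) (x : D) :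
    StrongDual ℝ C(D, H) :=
  (innerSL ℝ c).comp (ContinuousMap.evalCLM ℝ x)

open Metric

section Machinery

set_option linter.unusedSectionVars false

variable {D : Type*} [MetricSpace D] [CompactSpace D]
variable {H₁ : Type*} [NormedAddCommGroup H₁] [InnerProductSpace ℝ H₁]

/-- A bump function: 1 on `closedBall x₀ a`, 0 outside `ball x₀ b`, valued in `[0,1]`. -/
noncomputable def bump (x₀ : D) (a b : ℝ) : C(D, ℝ) :=
  ⟨fun y => max 0 (min 1 ((b - dist y x₀) / (b - a))), by
    apply Continuous.max continuous_const
    apply Continuous.min continuous_const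
    exact ((continuous_const.sub (continuous_id.dist continuous_const)).div_const _)⟩

lemma bump_nonneg (x₀ : D) (a b : ℝ) (y : D) : 0 ≤ bump x₀ a b y := le_max_left _ _

lemma bump_le_one (x₀ : D) (a b : ℝ) (y : D) : bump x₀ a b y ≤ 1 := by
  simp only [bump, ContinuousMap.coe_mk]
  rcases le_or_gt ((b - dist y x₀) / (b - a)) 1 with h | h
  · exact max_le zero_le_one (min_le_of_right_le h)
  · exact max_le zero_le_one (min_le_left _ _)

lemma bump_eq_one {x₀ y : D} {a b : ℝ} (hab : a < b) (h : dist y x₀ ≤ a) :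
    bump x₀ a b y = 1 := by
  simp only [bump, ContinuousMap.coe_mk]
  have hba : 0 < b - a := by linarith
  have : (1 : ℝ) ≤ (b - dist y x₀) / (b - a) := by
    rw [le_div_iff₀ hba]; have := dist_nonneg (x := y) (y := x₀); linarith
  rw [min_eq_left this, max_eq_right zero_le_one]

lemma bump_eq_zero {x₀ y : D} {a b : ℝ} (hab : a < b) (h : b ≤ dist y x₀) :
    bump x₀ a b y = 0 := by
  simp only [bump, ContinuousMap.coe_mk]
  have hba : 0 < b - a := by linarith
  have h1 : (b - dist y x₀) / (b - a) ≤ 0 := div_nonpos_of_nonpos_of_nonneg (by linarith) hba.le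
  rw [max_eq_left (min_le_of_right_le h1)]

/-- The localization `uₓ(g) = u(f • g)` of a functional `u` by a scalar function `f`. -/
noncomputable def loc (u : StrongDual ℝ C(D, H₁)) (f : C(D, ℝ)) : StrongDual ℝ C(D, H₁) :=
  LinearMap.mkContinuous
    { toFun := fun g => u (f • g)
      map_add' := fun g h => by show u (f • (g + h)) = _; rw [smul_add, map_add]
      map_smul' := fun r g => by
        show u (f • (r • g)) = r • u (f • g)
        have h : f • (r • g) = r • (f • g) := by
          ext y
          simp only [ContinuousMap.smul_apply', ContinuousMap.smul_apply]
          exact smul_comm _ _ _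
        rw [h, map_smul] }
    (‖u‖ * ‖f‖)
    (fun g => by
      have h1 : ‖f • g‖ ≤ ‖f‖ * ‖g‖ := by
        rw [ContinuousMap.norm_le _ (by positivity)]
        intro y
        rw [ContinuousMap.smul_apply', norm_smul]
        exact mul_le_mul (f.norm_coe_le_norm y) (g.norm_coe_le_norm y) (norm_nonneg _) (norm_nonneg _)
      calc ‖u (f • g)‖ ≤ ‖u‖ * ‖f • g‖ := u.le_opNorm _
        _ ≤ ‖u‖ * (‖f‖ * ‖g‖) := by gcongr
        _ = ‖u‖ * ‖f‖ * ‖g‖ := by ring)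

@[simp] lemma loc_apply (u : StrongDual ℝ C(D, H₁)) (f : C(D, ℝ)) (g : C(D, H₁)) :
    loc u f g = u (f • g) := rfl

lemma loc_add (u : StrongDual ℝ C(D, H₁)) (f f' : C(D, ℝ)) :
    loc u (f + f') = loc u f + loc u f' := by
  ext g
  simp only [loc_apply, ContinuousLinearMap.add_apply, ← map_add]
  congr 1
  ext y
  simp [ContinuousMap.smul_apply', add_smul]

lemma loc_one (u : StrongDual ℝ C(D, H₁)) : loc u 1 = u := by
  ext g; simp only [loc_apply, one_smul]

lemma loc_sum (u : StrongDual ℝ C(D, H₁)) {k : ℕ} (f : Fin k → C(D, ℝ)) :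
    loc u (∑ i, f i) = ∑ i, loc u (f i) := by
  induction k with
  | zero =>
      simp only [Finset.univ_eq_empty, Finset.sum_empty]
      ext g; simp only [loc_apply, ContinuousLinearMap.zero_apply, zero_smul, map_zero]
  | succ n ih =>
      rw [Fin.sum_univ_succ, Fin.sum_univ_succ, loc_add, ih (fun i => f i.succ)]

/-- A point `x` is *charged* by `u` if arbitrarily small neighbourhoods of `x`
carry functions not annihilated by `u`. -/
def charged (u : StrongDual ℝ C(D, H₁)) (x : D) : Prop :=
  ∀ δ > 0, ∃ g : C(D, H₁), (∀ y, δ ≤ dist y x → g y = 0) ∧ u g ≠ 0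

lemma sum_norm_loc_le (u : StrongDual ℝ C(D, H₁)) {k : ℕ} (f : Fin k → C(D, ℝ))
    (h0 : ∀ i y, 0 ≤ f i y) (h1 : ∀ y, ∑ i, f i y ≤ 1) :
    ∑ i, ‖loc u (f i)‖ ≤ ‖u‖ := by
  refine le_of_forall_pos_le_add fun ε hε => ?_
  rcases Nat.eq_zero_or_pos k with hk | hk
  · subst hk
    simp only [Finset.univ_eq_empty, Finset.sum_empty]
    positivity
  · have hkR : (0:ℝ) < k := by exact_mod_cast hk
    set ε' : ℝ := ε / k with hε'
    have hε'pos : 0 < ε' := by positivity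
    have hgex : ∀ i, ∃ g : C(D, H₁), ‖g‖ ≤ 1 ∧ ‖loc u (f i)‖ - ε' < (loc u (f i)) g := by
      intro i
      obtain ⟨g, hg1, hg2⟩ := (loc u (f i)).exists_lt_apply_of_lt_opNorm
        (show ‖loc u (f i)‖ - ε' < ‖loc u (f i)‖ by linarith)
      rcases le_or_gt 0 ((loc u (f i)) g) with h | h
      · exact ⟨g, hg1.le, by rwa [Real.norm_eq_abs, abs_of_nonneg h] at hg2⟩
      · refine ⟨-g, by rw [norm_neg]; exact hg1.le, ?_⟩
        rw [map_neg]
        rwa [Real.norm_eq_abs, abs_of_neg h] at hg2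
    choose g hgnorm hglt using hgex
    set G : C(D, H₁) := ∑ i, f i • g i with hG
    have hGnorm : ‖G‖ ≤ 1 := by
      rw [ContinuousMap.norm_le _ zero_le_one]
      intro y
      have hGy : G y = ∑ i, f i y • g i y := by
        rw [hG, ContinuousMap.sum_apply]
        rfl
      calc ‖G y‖ ≤ ∑ i, ‖f i y • g i y‖ := by rw [hGy]; exact norm_sum_le _ _
        _ ≤ ∑ i, f i y := by
            refine Finset.sum_le_sum fun i _ => ?_
            rw [norm_smul, Real.norm_eq_abs, abs_of_nonneg (h0 i y)]
            have hgy : ‖g i y‖ ≤ 1 := le_trans ((g i).norm_coe_le_norm y) (hgnorm i)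
            calc f i y * ‖g i y‖ ≤ f i y * 1 := mul_le_mul_of_nonneg_left hgy (h0 i y)
              _ = f i y := mul_one _
        _ ≤ 1 := h1 y
    have : Nonempty (Fin k) := Fin.pos_iff_nonempty.mp hk
    have hsum : ∑ i, (‖loc u (f i)‖ - ε') < u G := by
      have hUG : u G = ∑ i, (loc u (f i)) (g i) := by
        rw [hG, map_sum]
        simp only [loc_apply]
      rw [hUG]
      exact Finset.sum_lt_sum_of_nonempty Finset.univ_nonempty (fun i _ => hglt i)
    have hUG2 : u G ≤ ‖u‖ := by
      calc u G ≤ |u G| := le_abs_self _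
        _ = ‖u G‖ := (Real.norm_eq_abs _).symm
        _ ≤ ‖u‖ * ‖G‖ := u.le_opNorm G
        _ ≤ ‖u‖ * 1 := mul_le_mul_of_nonneg_left hGnorm (norm_nonneg u)
        _ = ‖u‖ := mul_one _
    have hkne : (k:ℝ) ≠ 0 := ne_of_gt hkR
    have hsplit : ∑ i, (‖loc u (f i)‖ - ε') = (∑ i, ‖loc u (f i)‖) - ε := by
      rw [Finset.sum_sub_distrib, Finset.sum_const, Finset.card_univ, Fintype.card_fin,
        nsmul_eq_mul, hε']
      field_simp
    rw [hsplit] at hsum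
    linarith


/-- If `g` vanishes near every charged point, then `u g = 0`. -/
lemma kill (u : StrongDual ℝ C(D, H₁)) (g : C(D, H₁))
    (hg : ∀ x : D, charged u x → ∃ δ > 0, ∀ y, dist y x < δ → g y = 0) : u g = 0 := by
  rcases isEmpty_or_nonempty D with hD | hD
  · have : g = 0 := by
      ext y
      exact (hD.false y).elim
    rw [this, map_zero]
  · have hPex : ∀ x : D, ∃ δ > 0, (∀ y, dist y x < δ → g y = 0) ∨
        (∀ h : C(D, H₁), (∀ y, δ ≤ dist y x → h y = 0) → u h = 0) := by
      intro x
      by_cases hc : charged u x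
      · obtain ⟨δ, hδ, hv⟩ := hg x hc
        exact ⟨δ, hδ, Or.inl hv⟩
      · unfold charged at hc
        push_neg at hc
        obtain ⟨δ, hδ, hk⟩ := hc
        exact ⟨δ, hδ, Or.inr hk⟩
    choose δ hδpos hP using hPex
    have hcov : (Set.univ : Set D) ⊆ ⋃ x : D, ball x (δ x / 2) := by
      intro y _
      exact Set.mem_iUnion.mpr ⟨y, mem_ball_self (by linarith [hδpos y])⟩
    obtain ⟨t, ht⟩ := isCompact_univ.elim_finite_subcover
      (fun x : D => ball x (δ x / 2)) (fun x => isOpen_ball) hcov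
    set φ : D → C(D, ℝ) := fun x => bump x (δ x / 2) (δ x) with hφ
    set ρ : C(D, ℝ) := ∑ x ∈ t, φ x with hρ
    have hρapp : ∀ y, ρ y = ∑ x ∈ t, φ x y := by
      intro y
      rw [hρ, ContinuousMap.sum_apply]
    have hρ1 : ∀ y, 1 ≤ ρ y := by
      intro y
      have := ht (Set.mem_univ y)
      simp only [Set.mem_iUnion, mem_ball] at this
      obtain ⟨x, hxt, hyx⟩ := this
      have hone : φ x y = 1 := bump_eq_one (by linarith [hδpos x]) hyx.le
      rw [hρapp y]
      calc (1:ℝ) = φ x y := hone.symm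
        _ ≤ ∑ x ∈ t, φ x y :=
          Finset.single_le_sum (f := fun x' => φ x' y)
            (fun i _ => bump_nonneg i _ _ y) hxt
    have hρne : ∀ y, ρ y ≠ 0 := fun y => by linarith [hρ1 y]
    set ψ : D → C(D, ℝ) := fun x =>
      ⟨fun y => φ x y / ρ y, ((φ x).continuous).div ρ.continuous hρne⟩ with hψ
    have hψapp : ∀ x y, ψ x y = φ x y / ρ y := fun x y => rfl
    have hgdec : g = ∑ x ∈ t, ψ x • g := by
      ext y
      rw [ContinuousMap.sum_apply]
      have : ∑ x ∈ t, (ψ x • g) y = ∑ x ∈ t, (φ x y / ρ y) • g y := by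
        refine Finset.sum_congr rfl fun x _ => ?_
        rw [ContinuousMap.smul_apply', hψapp]
      rw [this, ← Finset.sum_smul, ← Finset.sum_div, ← hρapp, div_self (hρne y), one_smul]
    have hterm : ∀ x ∈ t, u (ψ x • g) = 0 := by
      intro x _
      rcases hP x with hvan | hkil
      · have : ψ x • g = 0 := by
          ext y
          rw [ContinuousMap.smul_apply']
          rcases lt_or_ge (dist y x) (δ x) with h | h
          · rw [hvan y h, smul_zero]
            rfl
          · have : φ x y = 0 := bump_eq_zero (by linarith [hδpos x]) h
            rw [hψapp, this, zero_div, zero_smul]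
            rfl
        rw [this, map_zero]
      · refine hkil _ fun y hy => ?_
        have : φ x y = 0 := bump_eq_zero (by linarith [hδpos x]) hy
        rw [ContinuousMap.smul_apply', hψapp, this, zero_div, zero_smul]
    calc u g = u (∑ x ∈ t, ψ x • g) := by rw [← hgdec]
      _ = ∑ x ∈ t, u (ψ x • g) := map_sum u _ _
      _ = 0 := Finset.sum_eq_zero hterm

/-- A functional that only depends on the value at `x₀` is a Dirac. -/
lemma point_mass (u : StrongDual ℝ C(D, H₁)) [CompleteSpace H₁] (x₀ : D)
    (h : ∀ g : C(D, H₁), g x₀ = 0 → u g = 0) : ∃ c : H₁, u = dirac c x₀ := by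
  have hconst : ∀ v : H₁, ‖u (ContinuousMap.const D v)‖ ≤ ‖u‖ * ‖v‖ := by
    intro v
    have hcn : ‖ContinuousMap.const D v‖ ≤ ‖v‖ := by
      rw [ContinuousMap.norm_le _ (norm_nonneg v)]
      intro y
      simp
    calc ‖u (ContinuousMap.const D v)‖ ≤ ‖u‖ * ‖ContinuousMap.const D v‖ := u.le_opNorm _
      _ ≤ ‖u‖ * ‖v‖ := mul_le_mul_of_nonneg_left hcn (norm_nonneg u)
  set L : H₁ →L[ℝ] ℝ := LinearMap.mkContinuous
    { toFun := fun v => u (ContinuousMap.const D v)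
      map_add' := fun v w => by
        show u (ContinuousMap.const D (v + w)) = _
        have : ContinuousMap.const D (v + w)
            = ContinuousMap.const D v + ContinuousMap.const D w := by
          ext y; simp
        rw [this, map_add]
      map_smul' := fun r v => by
        show u (ContinuousMap.const D (r • v)) = r • u (ContinuousMap.const D v)
        have : ContinuousMap.const D (r • v) = r • ContinuousMap.const D v := by
          ext y; simp
        rw [this, map_smul] }
    ‖u‖ hconst with hL
  have hLapp : ∀ v : H₁, L v = u (ContinuousMap.const D v) := fun v => rfl
  set c : H₁ := (InnerProductSpace.toDual ℝ H₁).symm L with hc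
  refine ⟨c, ?_⟩
  ext g
  have h1 : u g = u (ContinuousMap.const D (g x₀)) := by
    have h0 : u (g - ContinuousMap.const D (g x₀)) = 0 := by
      refine h _ ?_
      simp
    rw [map_sub] at h0
    linarith
  have h2 : dirac c x₀ g = (inner ℝ c (g x₀) : ℝ) := rfl
  have h3 : (inner ℝ c (g x₀) : ℝ) = L (g x₀) := by
    rw [hc]
    exact InnerProductSpace.toDual_symm_apply
  rw [h1, h2, h3, hLapp]

/-- Separation radius for finitely many distinct points. -/
lemma sep_radius {k : ℕ} (z : Fin k → D) (hinj : Function.Injective z) :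
    ∃ r > 0, ∀ i j, i ≠ j → 3 * r ≤ dist (z i) (z j) := by
  rcases le_or_gt k 1 with hk | hk
  · refine ⟨1, one_pos, fun i j hij => ?_⟩
    exact absurd (Fin.ext (by omega : (i : ℕ) = (j : ℕ))) hij
  · set t : Finset (Fin k × Fin k) := Finset.univ.offDiag with ht
    have htne : t.Nonempty := by
      refine ⟨(⟨0, by omega⟩, ⟨1, by omega⟩), Finset.mem_offDiag.mpr
        ⟨Finset.mem_univ _, Finset.mem_univ _, ?_⟩⟩
      intro h
      have := congrArg Fin.val h
      simp at this
    set dmin : ℝ := t.inf' htne fun p => dist (z p.1) (z p.2) with hdmin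
    have hdpos : 0 < dmin := by
      rw [hdmin, Finset.lt_inf'_iff]
      intro p hp
      have hne := (Finset.mem_offDiag.mp hp).2.2
      exact dist_pos.mpr fun h => hne (hinj h)
    refine ⟨dmin / 3, by positivity, fun i j hij => ?_⟩
    have hmem : (i, j) ∈ t := Finset.mem_offDiag.mpr ⟨Finset.mem_univ _, Finset.mem_univ _, hij⟩
    have := Finset.inf'_le (fun p : Fin k × Fin k => dist (z p.1) (z p.2)) hmem
    rw [← hdmin] at this
    linarith

set_option maxHeartbeats 1000000 in
/-- The core extremality argument: `u` cannot charge `NS + 1` distinct points. -/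
lemma core {H₂ : Type*} [AddCommGroup H₂] [Module ℝ H₂]
    (u : StrongDual ℝ C(D, H₁)) (S : StrongDual ℝ C(D, H₁) →ₗ[ℝ] H₂)
    [FiniteDimensional ℝ (LinearMap.range S)] {NS : ℕ}
    (hrank : Module.finrank ℝ (LinearMap.range S) = NS)
    (toolE : ∀ d, S d = 0 → ‖u + d‖ ≤ ‖u‖ → ‖u - d‖ ≤ ‖u‖ → d = 0)
    (toolN : ∀ d, S d = 0 → ‖u‖ ≤ ‖u + d‖)
    (z : Fin (NS + 1) → D) (hinj : Function.Injective z)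
    (hch : ∀ i, charged u (z i)) : False := by
  obtain ⟨r, hrpos, hsep⟩ := sep_radius z hinj
  have hab : r / 2 < r := by linarith
  set f : Fin (NS + 1) → C(D, ℝ) := fun i => bump (z i) (r / 2) r with hf
  have hgex : ∀ i, ∃ g : C(D, H₁), (∀ y, r / 2 ≤ dist y (z i) → g y = 0) ∧ u g ≠ 0 :=
    fun i => hch i (r / 2) (by positivity)
  choose gs hgs0 hgsne using hgex
  have hfar : ∀ (i j : Fin (NS + 1)) (y : D), i ≠ j → dist y (z j) < r →
      r ≤ dist y (z i) := by
    intro i j y hij hy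
    have h3 := hsep i j hij
    have h4 := dist_triangle (z i) y (z j)
    have h5 : dist (z i) y = dist y (z i) := dist_comm _ _
    linarith
  have hfg_self : ∀ i, f i • gs i = gs i := by
    intro i
    ext y
    rw [ContinuousMap.smul_apply']
    rcases le_or_gt (r / 2) (dist y (z i)) with h | h
    · rw [hgs0 i y h, smul_zero]
    · rw [hf]
      rw [bump_eq_one hab h.le, one_smul]
  have hfg_other : ∀ i j, i ≠ j → f i • gs j = 0 := by
    intro i j hij
    ext y
    rw [ContinuousMap.smul_apply']
    rcases le_or_gt (r / 2) (dist y (z j)) with h | h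
    · rw [hgs0 j y h, smul_zero]
      rfl
    · rw [hf]
      rw [bump_eq_zero hab (hfar i j y hij (by linarith)), zero_smul]
      rfl
  -- linear dependence of the images
  set v : Fin (NS + 1) → LinearMap.range S :=
    fun i => ⟨S (loc u (f i)), LinearMap.mem_range_self S _⟩ with hv
  have hdep : ¬ LinearIndependent ℝ v := by
    intro h
    have := h.fintype_card_le_finrank
    rw [Fintype.card_fin, hrank] at this
    omega
  obtain ⟨s, hs0, j, hsj⟩ := Fintype.not_linearIndependent_iff.mp hdep
  set d : StrongDual ℝ C(D, H₁) := ∑ i, s i • loc u (f i) with hd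
  have hSd : S d = 0 := by
    have h2 := congrArg (LinearMap.range S).subtype hs0
    rw [map_sum, map_zero] at h2
    rw [hd, map_sum]
    rw [← h2]
    refine Finset.sum_congr rfl fun i _ => ?_
    rw [map_smul, map_smul]
    rfl
  have hdg : ∀ i, d (gs i) = s i * u (gs i) := by
    intro i
    rw [hd, ContinuousLinearMap.sum_apply]
    rw [Finset.sum_eq_single i ?_ (by simp)]
    · rw [ContinuousLinearMap.smul_apply, loc_apply, hfg_self, smul_eq_mul]
    · intro j' _ hj'
      rw [ContinuousLinearMap.smul_apply, loc_apply, hfg_other j' i hj', map_zero, smul_zero]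
  set A : ℝ := ∑ i, |s i| with hA
  have hA0 : 0 ≤ A := Finset.sum_nonneg fun i _ => abs_nonneg _
  set ε₀ : ℝ := (1 + A)⁻¹ with hε₀
  have hε₀pos : 0 < ε₀ := by rw [hε₀]; positivity
  have hsabs : ∀ i, |s i| ≤ A :=
    fun i => Finset.single_le_sum (f := fun i => |s i|) (fun i _ => abs_nonneg _)
      (Finset.mem_univ i)
  have hcoef : ∀ ε : ℝ, |ε| ≤ ε₀ → ∀ i, 0 ≤ 1 + ε * s i := by
    intro ε hε i
    have h1 : |ε * s i| ≤ ε₀ * A := by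
      rw [abs_mul]
      exact mul_le_mul hε (hsabs i) (abs_nonneg _) hε₀pos.le
    have h2 : ε₀ * A ≤ 1 := by
      rw [hε₀, inv_mul_le_iff₀ (by positivity : (0:ℝ) < 1 + A)]
      linarith
    have h3 := neg_abs_le (ε * s i)
    linarith
  -- pointwise facts about the bump family
  have hf0 : ∀ i y, 0 ≤ f i y := fun i y => bump_nonneg _ _ _ y
  have hfsum : ∀ y, ∑ i, f i y ≤ 1 := by
    intro y
    by_cases hex : ∃ i, dist y (z i) < r
    · obtain ⟨i, hi⟩ := hex
      rw [Finset.sum_eq_single i ?_ (by simp)]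
      · exact bump_le_one _ _ _ y
      · intro j' _ hj'
        rw [hf]
        exact bump_eq_zero hab (hfar j' i y hj' hi)
    · push_neg at hex
      have hz : ∀ i : Fin (NS + 1), f i y = 0 := by
        intro i
        rw [hf]
        exact bump_eq_zero hab (hex i)
      rw [Finset.sum_eq_zero fun i _ => hz i]
      norm_num
  -- the (★★) bound with the complementary function
  set f₀ : C(D, ℝ) := 1 - ∑ i, f i with hf₀
  have hf₀app : ∀ y, f₀ y = 1 - ∑ i, f i y := by
    intro y
    rw [hf₀, ContinuousMap.sub_apply, ContinuousMap.one_apply, ContinuousMap.sum_apply]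
  have hstar : ‖loc u f₀‖ + ∑ i, ‖loc u (f i)‖ ≤ ‖u‖ := by
    have := sum_norm_loc_le u (Fin.cons f₀ f : Fin (NS + 2) → C(D, ℝ)) ?_ ?_
    · rwa [Fin.sum_univ_succ, Fin.cons_zero] at this
      -- remaining: terms with succ
    · intro i y
      refine Fin.cases ?_ ?_ i
      · rw [Fin.cons_zero, hf₀app]
        linarith [hfsum y]
      · intro i'
        rw [Fin.cons_succ]
        exact hf0 i' y
    · intro y
      rw [Fin.sum_univ_succ, Fin.cons_zero, hf₀app y]
      have : ∑ i : Fin (NS + 1), (Fin.cons f₀ f : Fin (NS + 2) → C(D, ℝ)) i.succ y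
          = ∑ i, f i y := by
        refine Finset.sum_congr rfl fun i _ => ?_
        rw [Fin.cons_succ]
      rw [this]
      linarith
  have hu_dec : u = loc u f₀ + ∑ i, loc u (f i) := by
    rw [← loc_sum, ← loc_add, hf₀, sub_add_cancel, loc_one]
  set β : ℝ := ∑ i, s i * ‖loc u (f i)‖ with hβ
  have hnb : ∀ ε : ℝ, |ε| ≤ ε₀ → ‖u + ε • d‖ ≤ ‖u‖ + ε * β := by
    intro ε hε
    have hεd : ε • d = ∑ i, (ε * s i) • loc u (f i) := by
      rw [hd, Finset.smul_sum]
      refine Finset.sum_congr rfl fun i _ => ?_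
      rw [smul_smul]
    have hcomb : u + ε • d = loc u f₀ + ∑ i, (1 + ε * s i) • loc u (f i) := by
      have h1 : ∑ i, (1 + ε * s i) • loc u (f i)
          = ∑ i, loc u (f i) + ∑ i, (ε * s i) • loc u (f i) := by
        rw [← Finset.sum_add_distrib]
        refine Finset.sum_congr rfl fun i _ => ?_
        rw [add_smul, one_smul]
      rw [h1, ← hεd, ← add_assoc, ← hu_dec]
    rw [hcomb]
    calc ‖loc u f₀ + ∑ i, (1 + ε * s i) • loc u (f i)‖
        ≤ ‖loc u f₀‖ + ‖∑ i, (1 + ε * s i) • loc u (f i)‖ := norm_add_le (E := StrongDual ℝ C(D, H₁)) _ _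
      _ ≤ ‖loc u f₀‖ + ∑ i, ‖(1 + ε * s i) • loc u (f i)‖ := by
          gcongr
          exact norm_sum_le (E := StrongDual ℝ C(D, H₁)) _ _
      _ = ‖loc u f₀‖ + ∑ i, (1 + ε * s i) * ‖loc u (f i)‖ := by
          congr 1
          refine Finset.sum_congr rfl fun i _ => ?_
          rw [norm_smul_of_nonneg (E := StrongDual ℝ C(D, H₁)) (hcoef ε hε i)]
      _ = (‖loc u f₀‖ + ∑ i, ‖loc u (f i)‖) + ε * β := by
          have h2 : ∑ i, (1 + ε * s i) * ‖loc u (f i)‖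
              = ∑ i, ‖loc u (f i)‖ + ε * β := by
            rw [hβ, Finset.mul_sum, ← Finset.sum_add_distrib]
            refine Finset.sum_congr rfl fun i _ => ?_
            ring
          rw [h2, add_assoc]
      _ ≤ ‖u‖ + ε * β := by linarith [hstar]
  by_cases hβ0 : β = 0
  · have hd1 : ‖u + ε₀ • d‖ ≤ ‖u‖ := by
      have := hnb ε₀ (by rw [abs_of_pos hε₀pos])
      rw [hβ0] at this
      linarith
    have hd2 : ‖u - ε₀ • d‖ ≤ ‖u‖ := by
      have := hnb (-ε₀) (by rw [abs_neg, abs_of_pos hε₀pos])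
      rw [hβ0] at this
      rw [sub_eq_add_neg]
      rw [show (-ε₀) • d = -(ε₀ • d) by ext g; simp] at this
      linarith
    have hdz : ε₀ • d = 0 := toolE _ (by rw [map_smul, hSd, smul_zero]) hd1 hd2
    have hd0 : d = 0 := by
      rw [← one_smul ℝ d, ← inv_mul_cancel₀ (ne_of_gt hε₀pos), mul_smul, hdz, smul_zero]
    have hcontr := hdg j
    rw [hd0, ContinuousLinearMap.zero_apply] at hcontr
    exact (mul_ne_zero hsj (hgsne j)) hcontr.symm
  · set ε : ℝ := if 0 < β then -ε₀ else ε₀ with hε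
    have hεabs : |ε| ≤ ε₀ := by
      rw [hε]
      split_ifs
      · rw [abs_neg, abs_of_pos hε₀pos]
      · rw [abs_of_pos hε₀pos]
    have hεβ : ε * β < 0 := by
      rw [hε]
      split_ifs with h
      · have : 0 < ε₀ * β := mul_pos hε₀pos h
        nlinarith
      · have hβneg : β < 0 := lt_of_le_of_ne (not_lt.mp h) hβ0
        nlinarith
    have h1 := hnb ε hεabs
    have h2 := toolN (ε • d) (by rw [map_smul, hSd, smul_zero])
    linarith

set_option maxHeartbeats 1000000 in
/-- Decomposition of a functional whose charged set is contained in finitely many points. -/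
lemma decomp [CompleteSpace H₁] (u : StrongDual ℝ C(D, H₁)) {k : ℕ} (z : Fin k → D)
    (hinj : Function.Injective z) (hsub : ∀ x, charged u x → ∃ i, x = z i) :
    ∃ c : Fin k → H₁, u = ∑ i, dirac (c i) (z i) := by
  rcases Nat.eq_zero_or_pos k with hk | hk
  · subst hk
    have hu0 : u = 0 := by
      ext g
      rw [ContinuousLinearMap.zero_apply]
      refine kill u g fun x hx => ?_
      obtain ⟨i, -⟩ := hsub x hx
      exact i.elim0
    exact ⟨fun i => i.elim0, by rw [hu0]; simp⟩
  · obtain ⟨r, hrpos, hsep⟩ := sep_radius z hinj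
    have hab : r / 2 < r := by linarith
    set f : Fin k → C(D, ℝ) := fun i => bump (z i) (r / 2) r with hf
    have hfar : ∀ (i j : Fin k) (y : D), i ≠ j → dist y (z j) < r → r ≤ dist y (z i) := by
      intro i j y hij hy
      have h3 := hsep i j hij
      have h4 := dist_triangle (z i) y (z j)
      have h5 : dist (z i) y = dist y (z i) := dist_comm _ _
      linarith
    have hrem : loc u (1 - ∑ i, f i) = 0 := by
      ext g
      rw [loc_apply, ContinuousLinearMap.zero_apply]
      refine kill u _ fun x hx => ?_
      obtain ⟨i, rfl⟩ := hsub x hx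
      refine ⟨r / 2, by positivity, fun y hy => ?_⟩
      rw [ContinuousMap.smul_apply']
      have hfi : f i y = 1 := by rw [hf]; exact bump_eq_one hab hy.le
      have hsum : ∑ j, f j y = 1 := by
        rw [Finset.sum_eq_single i ?_ (by simp)]
        · exact hfi
        · intro j' _ hj'
          rw [hf]
          exact bump_eq_zero hab (hfar j' i y hj' (by linarith))
      have hzero : ((1 : C(D, ℝ)) - ∑ j, f j) y = 0 := by
        rw [ContinuousMap.sub_apply, ContinuousMap.one_apply, ContinuousMap.sum_apply, hsum,
          sub_self]
      rw [hzero, zero_smul]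
    have hpm : ∀ i, ∃ c : H₁, loc u (f i) = dirac c (z i) := by
      intro i
      refine point_mass _ _ fun g hg => ?_
      rw [loc_apply]
      have habs : ∀ ε > 0, |u (f i • g)| ≤ ε := by
        intro ε hε
        set ε' : ℝ := ε / (‖u‖ + 1) with hε'
        have hε'pos : 0 < ε' := by rw [hε']; positivity
        obtain ⟨δ, hδpos, hδ⟩ := Metric.continuousAt_iff.mp (g.continuous.continuousAt) ε' hε'pos
        have hδ' : ∀ y, dist y (z i) < δ → ‖g y‖ < ε' := by
          intro y hy
          have := hδ hy
          rwa [hg, dist_zero_right] at this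
        set χ : C(D, ℝ) := bump (z i) (δ / 2) δ with hχ
        have hδab : δ / 2 < δ := by linarith
        have hsplit : f i • g = χ • (f i • g) + ((1 : C(D, ℝ)) - χ) • (f i • g) := by
          ext y
          simp only [ContinuousMap.add_apply, ContinuousMap.smul_apply',
            ContinuousMap.sub_apply, ContinuousMap.one_apply]
          rw [← add_smul, add_sub_cancel, one_smul]
        have hz2 : u (((1 : C(D, ℝ)) - χ) • (f i • g)) = 0 := by
          refine kill u _ fun x hx => ?_
          obtain ⟨j, rfl⟩ := hsub x hx
          by_cases hji : j = i
          · subst hji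
            refine ⟨δ / 2, by positivity, fun y hy => ?_⟩
            have : χ y = 1 := by rw [hχ]; exact bump_eq_one hδab hy.le
            rw [ContinuousMap.smul_apply', ContinuousMap.sub_apply, ContinuousMap.one_apply,
              this, sub_self, zero_smul]
          · refine ⟨r, hrpos, fun y hy => ?_⟩
            have : f i y = 0 := by
              rw [hf]
              exact bump_eq_zero hab (hfar i j y (fun h => hji h.symm) hy)
            rw [ContinuousMap.smul_apply', ContinuousMap.smul_apply', this, zero_smul,
              smul_zero]
        have hnorm : ‖χ • (f i • g)‖ ≤ ε' := by
          rw [ContinuousMap.norm_le _ hε'pos.le]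
          intro y
          rw [ContinuousMap.smul_apply', ContinuousMap.smul_apply']
          by_cases hy : dist y (z i) < δ
          · have hb1 : |χ y| ≤ 1 := by
              rw [abs_le]
              constructor
              · linarith [bump_nonneg (z i) (δ / 2) δ y]
              · exact bump_le_one _ _ _ y
            have hb2 : |f i y| ≤ 1 := by
              rw [abs_le]
              constructor
              · rw [hf]; linarith [bump_nonneg (z i) (r / 2) r y]
              · rw [hf]; exact bump_le_one _ _ _ y
            have hgy := (hδ' y hy).le
            calc ‖χ y • f i y • g y‖ = |χ y| * (|f i y| * ‖g y‖) := by
                  rw [norm_smul, norm_smul, Real.norm_eq_abs, Real.norm_eq_abs]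
              _ ≤ 1 * (1 * ε') := by
                  refine mul_le_mul hb1 ?_ (by positivity) zero_le_one
                  refine mul_le_mul hb2 hgy (norm_nonneg _) zero_le_one
              _ = ε' := by ring
          · have : χ y = 0 := by rw [hχ]; exact bump_eq_zero hδab (not_lt.mp hy)
            rw [this, zero_smul, norm_zero]
            exact hε'pos.le
        have hfinal : |u (f i • g)| ≤ ‖u‖ * ε' := by
          rw [hsplit, map_add, hz2, add_zero]
          calc |u (χ • (f i • g))| = ‖u (χ • (f i • g))‖ := (Real.norm_eq_abs _).symm
            _ ≤ ‖u‖ * ‖χ • (f i • g)‖ := u.le_opNorm _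
            _ ≤ ‖u‖ * ε' := mul_le_mul_of_nonneg_left hnorm (norm_nonneg u)
        refine le_trans hfinal ?_
        rw [hε']
        calc ‖u‖ * (ε / (‖u‖ + 1)) ≤ (‖u‖ + 1) * (ε / (‖u‖ + 1)) := by
              refine mul_le_mul_of_nonneg_right (by linarith) (by positivity)
          _ = ε := by
              rw [mul_comm, div_mul_cancel₀]
              positivity
        -- end habs
      have h0 : |u (f i • g)| ≤ 0 := by
        refine le_of_forall_pos_le_add fun ε hε => ?_
        rw [zero_add]
        exact habs ε hε
      have := le_antisymm h0 (abs_nonneg _)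
      exact abs_eq_zero.mp this
    choose c hc using hpm
    refine ⟨c, ?_⟩
    have hdec : u = loc u (1 - ∑ i, f i) + ∑ i, loc u (f i) := by
      rw [← loc_sum, ← loc_add, sub_add_cancel, loc_one]
    rw [hdec, hrem, zero_add]
    exact Finset.sum_congr rfl fun i _ => hc i

lemma dirac_zero (x : D) : dirac (0 : H₁) x = 0 := by
  ext g
  show (inner ℝ (0 : H₁) (g x) : ℝ) = 0
  exact inner_zero_left _

lemma enum_set {α : Type*} {t : Set α} (ht : t.Finite) {n : ℕ} (hcard : t.ncard = n) :
    ∃ z : Fin n → α, Function.Injective z ∧ ∀ x, x ∈ t ↔ ∃ i, x = z i := by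
  classical
  have hc : Fintype.card {x // x ∈ ht.toFinset} = n := by
    rw [Fintype.card_coe, ← Set.ncard_eq_toFinset_card t ht, hcard]
  set e := Fintype.equivFinOfCardEq hc with he
  refine ⟨fun i => (e.symm i : α), ?_, ?_⟩
  · intro i j hij
    exact e.symm.injective (Subtype.coe_injective hij)
  · intro x
    constructor
    · intro hx
      exact ⟨e ⟨x, ht.mem_toFinset.mpr hx⟩,
        (congrArg Subtype.val (e.symm_apply_apply ⟨x, ht.mem_toFinset.mpr hx⟩)).symm⟩
    · rintro ⟨i, rfl⟩
      exact ht.mem_toFinset.mp (e.symm i).2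

lemma pad_sum {D : Type*} [MetricSpace D] [CompactSpace D]
    {H₁ : Type*} [NormedAddCommGroup H₁] [InnerProductSpace ℝ H₁]
    (x₀ : D) {k NS : ℕ} (hk : k ≤ NS) (c : Fin k → H₁) (z : Fin k → D) :
    ∃ (c' : Fin NS → H₁) (x' : Fin NS → D),
      ∑ i, dirac (c' i) (x' i) = ∑ i : Fin k, dirac (c i) (z i) := by
  classical
  refine ⟨fun j => if h : (j : ℕ) < k then c ⟨j, h⟩ else 0,
    fun j => if h : (j : ℕ) < k then z ⟨j, h⟩ else x₀, ?_⟩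
  have key : ∀ j : Fin NS,
      dirac (if h : (j : ℕ) < k then c ⟨j, h⟩ else 0)
        (if h : (j : ℕ) < k then z ⟨j, h⟩ else x₀)
      = if h : (j : ℕ) < k then dirac (c ⟨j, h⟩) (z ⟨j, h⟩) else 0 := by
    intro j
    by_cases h : (j : ℕ) < k
    · rw [dif_pos h, dif_pos h, dif_pos h]
    · rw [dif_neg h, dif_neg h, dif_neg h]
      exact dirac_zero x₀
  rw [Finset.sum_congr rfl fun j _ => key j]
  rw [Fin.sum_univ_eq_sum_range
    (fun n => if h : n < k then dirac (c ⟨n, h⟩) (z ⟨n, h⟩) else 0) NS]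
  rw [← Finset.sum_subset (Finset.range_subset_range.mpr hk)
    (fun n _ hn => dif_neg (by simpa using hn))]
  rw [← Fin.sum_univ_eq_sum_range
    (fun n => if h : n < k then dirac (c ⟨n, h⟩) (z ⟨n, h⟩) else 0) k]
  exact Finset.sum_congr rfl fun i _ => by rw [dif_pos i.isLt]

end Machinery

set_option maxHeartbeats 2000000 in
/-- Let `D` be compact, `H₁` a separable real Hilbert space,
`S : M(D,H₁) → H₂` linear and weak-* to weak continuous with `dim (Ran S) = N_S < ∞`,
`p_d ∈ H₂` and `α > 0`.  Then every extremal point of the solution set of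
`min_u (1/(2α))‖S u − p_d‖² + ‖u‖_{M(D,H₁)}` is a linear combination of at most `N_S`
Dirac delta measures. -/
theorem extreme_points_are_dirac_combinations
    (D H₁ H₂ : Type*) [MetricSpace D] [CompactSpace D]
    [NormedAddCommGroup H₁] [InnerProductSpace ℝ H₁] [CompleteSpace H₁]
    [TopologicalSpace.SeparableSpace H₁]
    [NormedAddCommGroup H₂] [InnerProductSpace ℝ H₂] [CompleteSpace H₂]
    [TopologicalSpace.SeparableSpace H₂]
    (S : StrongDual ℝ C(D, H₁) →ₗ[ℝ] H₂)
    (hScont : ∀ y : H₂,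
      Continuous fun u : WeakDual ℝ C(D, H₁) => (inner ℝ (S (WeakDual.toStrongDual u)) y : ℝ))
    (NS : ℕ) [FiniteDimensional ℝ (LinearMap.range S)]
    (hrank : Module.finrank ℝ (LinearMap.range S) = NS)
    (p_d : H₂) (α : ℝ) (hα : 0 < α)
    (U : Set (StrongDual ℝ C(D, H₁)))
    (hU : U = {u | ∀ v, (1 / (2 * α)) * ‖S u - p_d‖ ^ 2 + ‖u‖ ≤
                        (1 / (2 * α)) * ‖S v - p_d‖ ^ 2 + ‖v‖}) :
    ∀ u ∈ Set.extremePoints ℝ U,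
      ∃ (c : Fin NS → H₁) (x : Fin NS → D), u = ∑ j, dirac (c j) (x j) := by
  subst hU
  intro u hu
  rw [mem_extremePoints] at hu
  obtain ⟨huU, hext⟩ := hu
  rw [Set.mem_setOf_eq] at huU
  set J : StrongDual ℝ C(D, H₁) → ℝ :=
    fun w => (1 / (2 * α)) * ‖S w - p_d‖ ^ 2 + ‖w‖ with hJ
  have hγpos : 0 < 1 / (2 * α) := by positivity
  -- every minimizer has the same image under S and the same norm
  have hSeq : ∀ v : StrongDual ℝ C(D, H₁), (∀ w, J v ≤ J w) → S v = S u ∧ ‖v‖ = ‖u‖ := by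
    intro v hv
    have e2 : J v ≤ J u := hv u
    have e3 : J u ≤ J v := huU v
    set w : StrongDual ℝ C(D, H₁) := (1 / 2 : ℝ) • u + (1 / 2 : ℝ) • v with hw
    have e1 : J u ≤ J w := huU w
    set a : H₂ := S u - p_d with ha
    set b : H₂ := S v - p_d with hb
    have hSw : S w - p_d = (1 / 2 : ℝ) • (a + b) := by
      rw [hw, map_add, map_smul, map_smul, ha, hb]
      module
    have hnormw : ‖S w - p_d‖ ^ 2 = (1 / 4) * ‖a + b‖ ^ 2 := by
      rw [hSw, norm_smul, mul_pow, Real.norm_eq_abs,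
        abs_of_pos (by norm_num : (0:ℝ) < 1/2)]
      ring
    have hpar : ‖a + b‖ ^ 2 = 2 * ‖a‖ ^ 2 + 2 * ‖b‖ ^ 2 - ‖a - b‖ ^ 2 := by
      have h₁ := norm_add_sq_real a b
      have h₂ := norm_sub_sq_real a b
      linarith
    have hwnorm : ‖w‖ ≤ (1 / 2) * ‖u‖ + (1 / 2) * ‖v‖ := by
      rw [hw]
      calc ‖(1 / 2 : ℝ) • u + (1 / 2 : ℝ) • v‖
          ≤ ‖(1 / 2 : ℝ) • u‖ + ‖(1 / 2 : ℝ) • v‖ := norm_add_le (E := StrongDual ℝ C(D, H₁)) _ _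
        _ = (1 / 2) * ‖u‖ + (1 / 2) * ‖v‖ := by
            rw [norm_smul_of_nonneg (E := StrongDual ℝ C(D, H₁)) (by norm_num : (0:ℝ) ≤ 1/2),
              norm_smul_of_nonneg (E := StrongDual ℝ C(D, H₁)) (by norm_num : (0:ℝ) ≤ 1/2)]
    have hJu : J u = (1 / (2 * α)) * ‖a‖ ^ 2 + ‖u‖ := by rw [hJ]
    have hJv : J v = (1 / (2 * α)) * ‖b‖ ^ 2 + ‖v‖ := by rw [hJ]
    have hJw : J w = (1 / (2 * α)) * ((1 / 4) * (2 * ‖a‖ ^ 2 + 2 * ‖b‖ ^ 2 - ‖a - b‖ ^ 2))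
        + ‖w‖ := by
      rw [hJ]
      simp only []
      rw [hnormw, hpar]
    have hkey : (1 / (2 * α)) * ‖a - b‖ ^ 2 ≤ 0 := by
      rw [hJu] at e1 e3 e2
      rw [hJv] at e3 e2
      rw [hJw] at e1
      linarith
    have hab : a = b := by
      have h1 : ‖a - b‖ ^ 2 ≤ 0 := by
        by_contra h
        push_neg at h
        exact absurd hkey (not_le.mpr (mul_pos hγpos h))
      have h2 : ‖a - b‖ = 0 := by
        have := sq_nonneg ‖a - b‖
        have h3 : ‖a - b‖ ^ 2 = 0 := le_antisymm h1 this
        exact pow_eq_zero_iff (n := 2) (by norm_num) |>.mp h3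
      have := norm_eq_zero.mp h2
      exact sub_eq_zero.mp this
    have hSvu : S v = S u := by
      have h := hab
      rw [ha, hb] at h
      exact (sub_left_inj.mp h).symm
    refine ⟨hSvu, ?_⟩
    have hnab : ‖a‖ = ‖b‖ := by rw [hab]
    rw [hJu] at e3 e2
    rw [hJv] at e3 e2
    rw [hnab] at e3 e2
    linarith
  -- membership criterion for the solution set
  have hU' : ∀ v : StrongDual ℝ C(D, H₁), S v = S u → ‖v‖ ≤ ‖u‖ → (∀ w, J v ≤ J w) := by
    intro v h1 h2 w
    calc J v = (1 / (2 * α)) * ‖S v - p_d‖ ^ 2 + ‖v‖ := rfl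
      _ ≤ (1 / (2 * α)) * ‖S u - p_d‖ ^ 2 + ‖u‖ := by rw [h1]; linarith
      _ = J u := rfl
      _ ≤ J w := huU w
  have toolE : ∀ d, S d = 0 → ‖u + d‖ ≤ ‖u‖ → ‖u - d‖ ≤ ‖u‖ → d = 0 := by
    intro d h1 h2 h3
    have hp : u + d ∈ {u' : StrongDual ℝ C(D, H₁) | ∀ v, J u' ≤ J v} := by
      rw [Set.mem_setOf_eq]
      exact hU' _ (by rw [map_add, h1, add_zero]) h2
    have hm : u - d ∈ {u' : StrongDual ℝ C(D, H₁) | ∀ v, J u' ≤ J v} := by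
      rw [Set.mem_setOf_eq]
      exact hU' _ (by rw [map_sub, h1, sub_zero]) h3
    have hseg : u ∈ openSegment ℝ (u - d) (u + d) := by
      refine ⟨1 / 2, 1 / 2, by norm_num, by norm_num, by norm_num, ?_⟩
      module
    have := (hext _ hm _ hp hseg).2
    nth_rewrite 2 [← add_zero u] at this
    exact add_left_cancel this
  have toolN : ∀ d, S d = 0 → ‖u‖ ≤ ‖u + d‖ := by
    intro d h1
    by_contra hlt
    push_neg at hlt
    have hmem : ∀ w, J (u + d) ≤ J w :=
      hU' _ (by rw [map_add, h1, add_zero]) hlt.le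
    have := (hSeq _ hmem).2
    linarith
  -- the set of charged points is finite with at most NS elements
  set Ch : Set D := {x | charged u x} with hCh
  have hnoinj : ∀ z : Fin (NS + 1) → D, Function.Injective z →
      ¬ (∀ i, charged u (z i)) :=
    fun z hz hc => core u S hrank toolE toolN z hz hc
  have hfin : Ch.Finite := by
    by_contra h
    obtain ⟨t, hts, htfin, htcard⟩ := Set.Infinite.exists_subset_ncard_eq h (NS + 1)
    obtain ⟨z, hzinj, hziff⟩ := enum_set htfin htcard
    exact hnoinj z hzinj fun i => hts ((hziff (z i)).mpr ⟨i, rfl⟩)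
  have hcard : Ch.ncard ≤ NS := by
    by_contra h
    push_neg at h
    obtain ⟨t, hts, htcard⟩ := Set.exists_subset_card_eq (s := Ch) (n := NS + 1) (by omega)
    obtain ⟨z, hzinj, hziff⟩ := enum_set (hfin.subset hts) htcard
    exact hnoinj z hzinj fun i => hts ((hziff (z i)).mpr ⟨i, rfl⟩)
  obtain ⟨z, hzinj, hziff⟩ := enum_set hfin rfl
  obtain ⟨c, hc⟩ := decomp u z hzinj fun x hx => (hziff x).mp hx
  rcases isEmpty_or_nonempty D with hD | hD
  · -- empty domain: the dual space is trivial and NS = 0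
    have hS0 : S = 0 := by
      ext w
      have hw0 : w = 0 := by
        ext g
        have : g = 0 := by
          ext y
          exact (hD.false y).elim
        rw [this, map_zero, ContinuousLinearMap.zero_apply]
      rw [hw0, map_zero]
      rfl
    have hNS : NS = 0 := by
      rw [← hrank, hS0, LinearMap.range_zero, finrank_bot]
    have hu0 : u = 0 := by
      ext g
      have : g = 0 := by
        ext y
        exact (hD.false y).elim
      rw [this, map_zero, map_zero]
    subst hNS
    refine ⟨Fin.elim0, Fin.elim0, ?_⟩
    rw [hu0]
    simp
  · obtain ⟨x₀⟩ := hD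
    obtain ⟨c', x', hcx⟩ := pad_sum x₀ hcard c z
    exact ⟨c', x', by rw [hc, hcx]⟩
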